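/- There exists an absolute constant C > 0 such that for every complex Borel measure μ of finite total variation on the unit circle and every t > 0, the normalized Lebesgue measure of the set of θ ∈ [0, 2π) at which the non-tangential limit I_μ*(θ) of the Cauchy integral I_μ exists and satisfies |I_μ*(θ)| > t is at most C · ‖μ‖ / t, where ‖μ‖ denotes the total variation (total mass) of μ. -/

import Mathlib

open MeasureTheory Complex Filter Set Metric ENNReal

noncomputable section

/-- The non-tangential approach region `Ω_α ⊂ D` with vertex `1`: the union of the open
disc of radius `α` centered at `0` with the (open) line segments joining `1` to the points
of that disc. -/
def OmegaRegion (α : ℝ) : Set ℂ :=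
  Metric.ball (0 : ℂ) α ∪ ⋃ w ∈ Metric.ball (0 : ℂ) α, openSegment ℝ (1 : ℂ) w

/-- The rotated non-tangential approach region `Ω_α(θ) = e^{iθ} Ω_α` with vertex `e^{iθ}`. -/
def OmegaRegionAt (α θ : ℝ) : Set ℂ :=
  (fun z : ℂ => Complex.exp (θ * Complex.I) * z) '' OmegaRegion α

/-- `Φ : ℂ → ℂ` has non-tangential limit `L` at `e^{iθ}` if for every `0 < α < 1`,
`Φ(z) → L` as `z → e^{iθ}` within `Ω_α(θ)`. -/
def HasNTLimit (Φ : ℂ → ℂ) (θ : ℝ) (L : ℂ) : Prop :=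
  ∀ α ∈ Set.Ioo (0 : ℝ) 1,
    Filter.Tendsto Φ (nhdsWithin (Complex.exp (θ * Complex.I)) (OmegaRegionAt α θ)) (nhds L)

/-- The Cauchy integral of the complex Borel measure `f dν` on the circle (parametrized by
`t ∈ [0, 2π)` via `t ↦ e^{it}`): `I_μ(z) = ∫₀^{2π} (z − e^{it})⁻¹ dμ(t)`. -/
def cauchyIntegral (ν : Measure ℝ) (f : ℝ → ℂ) (z : ℂ) : ℂ :=
  ∫ t in Set.Ico (0 : ℝ) (2 * Real.pi), (z - Complex.exp (t * Complex.I))⁻¹ * f t ∂ν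

/-- The total variation (total mass) of the complex measure `f dν` on `[0, 2π)`. -/
def totalVariation (ν : Measure ℝ) (f : ℝ → ℂ) : ℝ :=
  ∫ t in Set.Ico (0 : ℝ) (2 * Real.pi), ‖f t‖ ∂ν

/-- The Hardy space (quasi-)norm `‖Φ‖_{H^p} = sup_{0 ≤ r < 1} (∫₀^{2π} |Φ(re^{iθ})|^p dθ/2π)^{1/p}`,
valued in `ℝ≥0∞`. -/
def hardyNorm (p : ℝ) (Φ : ℂ → ℂ) : ℝ≥0∞ :=
  ⨆ r ∈ Set.Ico (0 : ℝ) 1,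
    ((∫⁻ θ in Set.Ico (0 : ℝ) (2 * Real.pi),
        ENNReal.ofReal (‖Φ ((r : ℂ) * Complex.exp (θ * Complex.I))‖ ^ p))
      / ENNReal.ofReal (2 * Real.pi)) ^ (1 / p)

/-- The non-tangential maximal function `N_α(Φ)(θ) = sup{|Φ(z)| : z ∈ Ω_α(θ)} ∈ [0, ∞]`. -/
def ntMax (α : ℝ) (Φ : ℂ → ℂ) (θ : ℝ) : ℝ≥0∞ :=
  ⨆ z ∈ OmegaRegionAt α θ, ENNReal.ofReal ‖Φ z‖

/-- The `L^p` (quasi-)norm of the non-tangential maximal function `N_α(Φ)` with respect to the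
normalized Lebesgue measure on `[0, 2π)`. -/
def ntMaxLpNorm (p α : ℝ) (Φ : ℂ → ℂ) : ℝ≥0∞ :=
  ((∫⁻ θ in Set.Ico (0 : ℝ) (2 * Real.pi), (ntMax α Φ θ) ^ p)
    / ENNReal.ofReal (2 * Real.pi)) ^ (1 / p)

open scoped Real Topology

/-! Kolmogorov's argument. The Herglotz integral `H(z) = ∫ (e^{it} + z) / (e^{it} - z) dμ(t)`
equals `μ(∂D) - 2 z I_μ(z)`, so at a point where `I_μ` has a non-tangential, hence radial, limit
`L` with `|L| > t ≥ ‖μ‖`, we get `|H| > t` along the radius near the boundary. Split `μ` into four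
positive measures `μ_k` (positive and negative parts of `re μ` and `im μ`). Each `H_k` has
nonnegative real part, so `Re (H_k / (H_k + s))` is harmonic, lies in `[0, 1]`, is at least `1/2`
where `|H_k| ≥ s`, and has circle means `Re (H_k(0) / (H_k(0) + s)) ≤ ‖μ_k‖ / s`. With `s = t / 4`
the sum of these four weights is at least `1/2` near each point of the set, and Fatou's lemma
bounds the measure of the set by `2 · 2π · 4 ‖μ‖ / s`. -/

section CircleKernels

lemma norm_sub_exp_mul_I_ge (z : ℂ) (t : ℝ) : 1 - ‖z‖ ≤ ‖z - cexp (t * I)‖ := by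
  simpa [norm_exp_ofReal_mul_I, norm_sub_rev] using norm_sub_norm_le (cexp (t * I)) z

lemma sub_exp_mul_I_ne_zero {z : ℂ} (hz : ‖z‖ < 1) (t : ℝ) : z - cexp (t * I) ≠ 0 :=
  norm_pos_iff.mp ((sub_pos.mpr hz).trans_le (norm_sub_exp_mul_I_ge z t))

lemma norm_inv_sub_exp_mul_I_le {z : ℂ} (hz : ‖z‖ < 1) (t : ℝ) :
    ‖(z - cexp (t * I))⁻¹‖ ≤ (1 - ‖z‖)⁻¹ := by
  rw [norm_inv]
  exact inv_anti₀ (sub_pos.mpr hz) (norm_sub_exp_mul_I_ge z t)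

lemma MeasureTheory.Integrable.cauchyKernel_mul {μ : Measure ℝ} {f : ℝ → ℂ}
    (hf : Integrable f μ) {z : ℂ} (hz : ‖z‖ < 1) : Integrable (fun t : ℝ => (z - cexp (t * I))⁻¹ * f t) μ :=
  hf.bdd_mul (by fun_prop) (ae_of_all _ (norm_inv_sub_exp_mul_I_le hz))

theorem differentiableOn_cauchyIntegral {ν : Measure ℝ} {f : ℝ → ℂ}
    (hf : IntegrableOn f (Ico 0 (2 * π)) ν) :
    DifferentiableOn ℂ (cauchyIntegral ν f) (ball 0 1) := by
  intro z hz
  rw [mem_ball_zero_iff] at hz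
  set δ := (1 - ‖z‖) / 2 with hδ_def
  have hδ : 0 < δ := by linarith
  have hnear : ∀ w ∈ ball z δ, ‖w‖ < 1 ∧ δ ≤ 1 - ‖w‖ := fun w hw => by
    have := norm_le_norm_add_norm_sub' w z
    rw [mem_ball_iff_norm] at hw
    constructor <;> linarith
  have hderiv : ∀ w ∈ ball z δ, ∀ t : ℝ, HasDerivAt (fun w => (w - cexp (t * I))⁻¹ * f t)
      (-1 / (w - cexp (t * I)) ^ 2 * f t) w := fun w hw t =>
    (((hasDerivAt_id w).sub_const _).inv (sub_exp_mul_I_ne_zero (hnear w hw).1 t)).mul_const _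
  have hbound : ∀ w ∈ ball z δ, ∀ t : ℝ, ‖-1 / (w - cexp (t * I)) ^ 2 * f t‖ ≤ (δ ^ 2)⁻¹ * ‖f t‖ :=
    fun w hw t => by
    rw [norm_mul, norm_div, norm_neg, norm_one, norm_pow, one_div]
    gcongr
    exact (hnear w hw).2.trans (norm_sub_exp_mul_I_ge w t)
  refine (hasDerivAt_integral_of_dominated_loc_of_deriv_le (ball_mem_nhds z hδ)
    (Eventually.of_forall fun w => ?_) (hf.cauchyKernel_mul hz) ?_
    (ae_of_all _ fun t w hw => hbound w hw t) (hf.norm.const_mul _)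
    (ae_of_all _ fun t w hw => hderiv w hw t)).2.differentiableAt.differentiableWithinAt
  · have := hf.aestronglyMeasurable; fun_prop
  · exact (Measurable.aestronglyMeasurable (by fun_prop)).mul hf.aestronglyMeasurable

end CircleKernels

section Herglotz

def herglotzIntegral (ν : Measure ℝ) (f : ℝ → ℂ) (z : ℂ) : ℂ :=
  ∫ t in Ico 0 (2 * π), (cexp (t * I) + z) / (cexp (t * I) - z) * f t ∂ν

variable {ν : Measure ℝ} {f : ℝ → ℂ} {z : ℂ}

lemma herglotzKernel_eq (hz : ‖z‖ < 1) (t : ℝ) :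
    (cexp (t * I) + z) / (cexp (t * I) - z) = 1 - 2 * z * (z - cexp (t * I))⁻¹ := by
  have h := sub_exp_mul_I_ne_zero hz t
  have h' : cexp (t * I) - z ≠ 0 := by rwa [← neg_sub, neg_ne_zero]
  field_simp
  ring

lemma herglotzKernel_mul_eq (hz : ‖z‖ < 1) (t : ℝ) (c : ℂ) :
    (cexp (t * I) + z) / (cexp (t * I) - z) * c = c - 2 * z * ((z - cexp (t * I))⁻¹ * c) := by
  rw [herglotzKernel_eq hz]
  ring

lemma re_herglotzKernel_nonneg (hz : ‖z‖ ≤ 1) (t : ℝ) :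
    0 ≤ ((cexp (t * I) + z) / (cexp (t * I) - z)).re := by
  rw [div_re, ← add_div]
  refine div_nonneg ?_ (normSq_nonneg _)
  have hnum : (cexp (t * I) + z).re * (cexp (t * I) - z).re
      + (cexp (t * I) + z).im * (cexp (t * I) - z).im = ‖cexp (t * I)‖ ^ 2 - ‖z‖ ^ 2 := by
    simp only [Complex.sq_norm, normSq_apply, add_re, sub_re, add_im, sub_im]
    ring
  rw [hnum, norm_exp_ofReal_mul_I]
  nlinarith [norm_nonneg z]

lemma MeasureTheory.Integrable.herglotzKernel_mul {μ : Measure ℝ} (hf : Integrable f μ)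
    (hz : ‖z‖ < 1) : Integrable (fun t : ℝ => (cexp (t * I) + z) / (cexp (t * I) - z) * f t) μ := by
  simp_rw [herglotzKernel_mul_eq hz]
  exact hf.sub ((hf.cauchyKernel_mul hz).const_mul _)

theorem herglotzIntegral_eq_sub_cauchyIntegral (hf : IntegrableOn f (Ico 0 (2 * π)) ν)
    (hz : ‖z‖ < 1) :
    herglotzIntegral ν f z = (∫ t in Ico 0 (2 * π), f t ∂ν) - 2 * z * cauchyIntegral ν f z := by
  simp_rw [herglotzIntegral, herglotzKernel_mul_eq hz]
  rw [integral_sub hf ((hf.cauchyKernel_mul hz).const_mul _), integral_const_mul]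
  rfl

lemma herglotzIntegral_zero (ν : Measure ℝ) (f : ℝ → ℂ) :
    herglotzIntegral ν f 0 = ∫ t in Ico 0 (2 * π), f t ∂ν := by
  simp [herglotzIntegral]

theorem differentiableOn_herglotzIntegral (hf : IntegrableOn f (Ico 0 (2 * π)) ν) :
    DifferentiableOn ℂ (herglotzIntegral ν f) (ball 0 1) := by
  have hC := differentiableOn_cauchyIntegral hf
  refine DifferentiableOn.congr (f := fun w => (∫ t in Ico 0 (2 * π), f t ∂ν)
    - 2 * w * cauchyIntegral ν f w) (by fun_prop) fun w hw => ?_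
  exact herglotzIntegral_eq_sub_cauchyIntegral hf (mem_ball_zero_iff.mp hw)

theorem re_herglotzIntegral_nonneg {g : ℝ → ℝ} (hg : IntegrableOn g (Ico 0 (2 * π)) ν)
    (hg0 : ∀ t, 0 ≤ g t) (hz : ‖z‖ < 1) : 0 ≤ (herglotzIntegral ν (fun t => (g t : ℂ)) z).re := by
  have hgC : IntegrableOn (fun t => (g t : ℂ)) (Ico 0 (2 * π)) ν := hg.ofReal
  have h := integral_re (hgC.herglotzKernel_mul hz)
  simp only [RCLike.re_to_complex] at h
  rw [herglotzIntegral, ← h]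
  refine integral_nonneg fun t => ?_
  rw [Pi.zero_apply, re_mul_ofReal]
  exact mul_nonneg (re_herglotzKernel_nonneg hz.le t) (hg0 t)

end Herglotz

section KolmogorovWeight

def kolmogorovWeight (s : ℝ) (w : ℂ) : ℝ := (w / (w + s)).re

variable {s : ℝ} {w : ℂ}

lemma kolmogorovWeight_eq (s : ℝ) (w : ℂ) :
    kolmogorovWeight s w = (w.re * (w.re + s) + w.im ^ 2) / ((w.re + s) ^ 2 + w.im ^ 2) := by
  simp only [kolmogorovWeight, div_re, normSq_apply, add_re, add_im, ofReal_re, ofReal_im,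
    add_zero]
  ring

lemma kolmogorovWeight_nonneg (hs : 0 ≤ s) (hw : 0 ≤ w.re) : 0 ≤ kolmogorovWeight s w := by
  rw [kolmogorovWeight_eq]
  positivity

lemma half_le_kolmogorovWeight (hs : 0 < s) (hw : 0 ≤ w.re) (hsw : s ≤ ‖w‖) :
    1 / 2 ≤ kolmogorovWeight s w := by
  have hsq : s ^ 2 ≤ w.re ^ 2 + w.im ^ 2 := by
    nlinarith [sq_norm_sub_sq_re w]
  rw [kolmogorovWeight_eq, le_div_iff₀ (by positivity)]
  nlinarith

lemma kolmogorovWeight_ofReal_le (hs : 0 < s) {m : ℝ} (hm : 0 ≤ m) :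
    kolmogorovWeight s m ≤ m / s := by
  rw [kolmogorovWeight_eq, ofReal_re, ofReal_im, div_le_div_iff₀ (by positivity) hs]
  nlinarith [mul_nonneg (mul_nonneg hm hm) hs.le, pow_nonneg hm 3]

theorem DifferentiableOn.div_add_ofReal {Φ : ℂ → ℂ} {U : Set ℂ} (hΦ : DifferentiableOn ℂ Φ U)
    (hre : ∀ z ∈ U, 0 ≤ (Φ z).re) (hs : 0 < s) :
    DifferentiableOn ℂ (fun z => Φ z / (Φ z + s)) U :=
  hΦ.div (hΦ.add_const _) fun z hz h => by
    have := congrArg re h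
    simp only [add_re, ofReal_re, zero_re] at this
    linarith [hre z hz]

end KolmogorovWeight

theorem integral_re_comp_circle_eq {Ψ : ℂ → ℂ} (hΨ : DifferentiableOn ℂ Ψ (ball 0 1)) {r : ℝ}
    (hr0 : 0 ≤ r) (hr1 : r < 1) :
    ∫ θ in Ico 0 (2 * π), (Ψ (r * cexp (θ * I))).re = 2 * π * (Ψ 0).re := by
  have hsub : closedBall (0 : ℂ) |r| ⊆ ball 0 1 :=
    closedBall_subset_ball (by rwa [abs_of_nonneg hr0])
  have hmean : Real.circleAverage (reCLM ∘ Ψ) 0 r = (Ψ 0).re := by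
    rw [reCLM.circleAverage_comp_comm, (hΨ.diffContOnCl_ball hsub).circleAverage, reCLM_apply]
    exact (hΨ.continuousOn.mono (sphere_subset_closedBall.trans (closedBall_subset_ball hr1))
      ).circleIntegrable hr0
  rw [Real.circleAverage_def, intervalIntegral.integral_of_le Real.two_pi_pos.le, smul_eq_mul,
    inv_mul_eq_iff_eq_mul₀ Real.two_pi_pos.ne'] at hmean
  rw [integral_Ico_eq_integral_Ioc, ← hmean]
  simp [circleMap]

lemma ofReal_mul_exp_mul_I_mem_ball {r : ℝ} (hr0 : 0 ≤ r) (hr1 : r < 1) (θ : ℝ) :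
    (r : ℂ) * cexp (θ * I) ∈ ball (0 : ℂ) 1 := by
  simpa [norm_exp_ofReal_mul_I, abs_of_nonneg hr0] using hr1

section PositiveDensity

variable {ν : Measure ℝ} {g : ℝ → ℝ} {s r : ℝ}

lemma differentiableOn_herglotzIntegral_div_add (hg : IntegrableOn g (Ico 0 (2 * π)) ν)
    (hg0 : ∀ t, 0 ≤ g t) (hs : 0 < s) :
    DifferentiableOn ℂ (fun z => herglotzIntegral ν (fun t => (g t : ℂ)) z
      / (herglotzIntegral ν (fun t => (g t : ℂ)) z + s)) (ball 0 1) :=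
  (differentiableOn_herglotzIntegral hg.ofReal).div_add_ofReal
    (fun _ hz => re_herglotzIntegral_nonneg hg hg0 (mem_ball_zero_iff.mp hz)) hs

lemma continuous_kolmogorovWeight_herglotzIntegral_circle (hg : IntegrableOn g (Ico 0 (2 * π)) ν)
    (hg0 : ∀ t, 0 ≤ g t) (hs : 0 < s) (hr0 : 0 ≤ r) (hr1 : r < 1) :
    Continuous fun θ : ℝ =>
      kolmogorovWeight s (herglotzIntegral ν (fun t => (g t : ℂ)) (r * cexp (θ * I))) :=
  continuous_re.comp <| (differentiableOn_herglotzIntegral_div_add hg hg0 hs).continuousOn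
    |>.comp_continuous (by fun_prop) (ofReal_mul_exp_mul_I_mem_ball hr0 hr1)

theorem integral_kolmogorovWeight_herglotzIntegral_circle_le
    (hg : IntegrableOn g (Ico 0 (2 * π)) ν) (hg0 : ∀ t, 0 ≤ g t) (hs : 0 < s) (hr0 : 0 ≤ r)
    (hr1 : r < 1) :
    ∫ θ in Ico 0 (2 * π),
        kolmogorovWeight s (herglotzIntegral ν (fun t => (g t : ℂ)) (r * cexp (θ * I)))
      ≤ 2 * π * ((∫ t in Ico 0 (2 * π), g t ∂ν) / s) := by
  simp only [kolmogorovWeight]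
  rw [integral_re_comp_circle_eq (differentiableOn_herglotzIntegral_div_add hg hg0 hs) hr0 hr1,
    herglotzIntegral_zero, integral_complex_ofReal]
  gcongr
  exact kolmogorovWeight_ofReal_le hs (setIntegral_nonneg measurableSet_Ico fun t _ => hg0 t)

end PositiveDensity

section JordanDecomposition

/-- For `k = 0, 1, 2, 3`: the positive parts of `re f`, `im f`, `-re f`, `-im f`. -/
def jordanPart (f : ℝ → ℂ) (k : ℕ) (t : ℝ) : ℝ := max ((-I) ^ k * f t).re 0

variable {f : ℝ → ℂ}

lemma jordanPart_nonneg (f : ℝ → ℂ) (k : ℕ) (t : ℝ) : 0 ≤ jordanPart f k t := le_max_right _ _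

lemma jordanPart_le_norm (f : ℝ → ℂ) (k : ℕ) (t : ℝ) : jordanPart f k t ≤ ‖f t‖ :=
  max_le ((re_le_norm _).trans (by simp)) (norm_nonneg _)

lemma sum_I_pow_mul_jordanPart (f : ℝ → ℂ) (t : ℝ) :
    ∑ k ∈ Finset.range 4, I ^ k * (jordanPart f k t : ℂ) = f t := by
  apply Complex.ext <;> simp [Finset.sum_range_succ, jordanPart, pow_succ, ← sub_eq_add_neg]

lemma MeasureTheory.Integrable.jordanPart {μ : Measure ℝ} (hf : Integrable f μ) (k : ℕ) :
    Integrable (jordanPart f k) μ := by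
  refine hf.norm.mono' ?_ (ae_of_all _ fun t => ?_)
  · have := hf.aestronglyMeasurable
    unfold _root_.jordanPart
    fun_prop
  · rw [Real.norm_of_nonneg (jordanPart_nonneg f k t)]
    exact jordanPart_le_norm f k t

lemma MeasureTheory.Integrable.ofReal_jordanPart {μ : Measure ℝ} (hf : Integrable f μ) (k : ℕ) :
    Integrable (fun t => (_root_.jordanPart f k t : ℂ)) μ :=
  (hf.jordanPart k).ofReal

end JordanDecomposition

section KolmogorovSum

variable {ν : Measure ℝ} {f : ℝ → ℂ} {s r : ℝ} {z : ℂ}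

lemma herglotzIntegral_eq_sum_jordanPart (hf : IntegrableOn f (Ico 0 (2 * π)) ν) (hz : ‖z‖ < 1) :
    herglotzIntegral ν f z =
      ∑ k ∈ Finset.range 4, I ^ k * herglotzIntegral ν (fun t => (jordanPart f k t : ℂ)) z := by
  have hint : ∀ k ∈ Finset.range 4, IntegrableOn (fun t : ℝ => I ^ k *
      ((cexp (t * I) + z) / (cexp (t * I) - z) * (jordanPart f k t : ℂ))) (Ico 0 (2 * π)) ν :=
    fun k _ => ((Integrable.ofReal_jordanPart hf k).herglotzKernel_mul hz).const_mul _
  simp_rw [herglotzIntegral, ← integral_const_mul]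
  rw [← integral_finsetSum _ hint]
  refine integral_congr_ae (ae_of_all _ fun t => ?_)
  dsimp only
  conv_lhs => rw [← sum_I_pow_mul_jordanPart f t, Finset.mul_sum]
  exact Finset.sum_congr rfl fun k _ => by ring

lemma norm_herglotzIntegral_le_sum_jordanPart (hf : IntegrableOn f (Ico 0 (2 * π)) ν)
    (hz : ‖z‖ < 1) :
    ‖herglotzIntegral ν f z‖ ≤
      ∑ k ∈ Finset.range 4, ‖herglotzIntegral ν (fun t => (jordanPart f k t : ℂ)) z‖ := by
  rw [herglotzIntegral_eq_sum_jordanPart hf hz]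
  refine (norm_sum_le _ _).trans_eq (Finset.sum_congr rfl fun k _ => ?_)
  simp

def kolmogorovSum (ν : Measure ℝ) (f : ℝ → ℂ) (s : ℝ) (z : ℂ) : ℝ :=
  ∑ k ∈ Finset.range 4,
    kolmogorovWeight s (herglotzIntegral ν (fun t => (jordanPart f k t : ℂ)) z)

lemma kolmogorovSum_nonneg (hf : IntegrableOn f (Ico 0 (2 * π)) ν) (hs : 0 ≤ s) (hz : ‖z‖ < 1) :
    0 ≤ kolmogorovSum ν f s z :=
  Finset.sum_nonneg fun k _ => kolmogorovWeight_nonneg hs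
    (re_herglotzIntegral_nonneg (Integrable.jordanPart hf k) (jordanPart_nonneg f k) hz)

lemma half_le_kolmogorovSum (hf : IntegrableOn f (Ico 0 (2 * π)) ν) (hs : 0 < s) (hz : ‖z‖ < 1)
    (hH : 4 * s < ‖herglotzIntegral ν f z‖) : 1 / 2 ≤ kolmogorovSum ν f s z := by
  obtain ⟨k, hk, hsk⟩ : ∃ k ∈ Finset.range 4,
      s < ‖herglotzIntegral ν (fun t => (jordanPart f k t : ℂ)) z‖ := by
    refine Finset.exists_lt_of_sum_lt ?_
    simpa [mul_comm] using hH.trans_le (norm_herglotzIntegral_le_sum_jordanPart hf hz)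
  have hre : ∀ j, 0 ≤ (herglotzIntegral ν (fun t => (jordanPart f j t : ℂ)) z).re := fun j =>
    re_herglotzIntegral_nonneg (Integrable.jordanPart hf j) (jordanPart_nonneg f j) hz
  calc 1 / 2 ≤ kolmogorovWeight s (herglotzIntegral ν (fun t => (jordanPart f k t : ℂ)) z) :=
        half_le_kolmogorovWeight hs (hre k) hsk.le
    _ ≤ kolmogorovSum ν f s z :=
        Finset.single_le_sum (fun j _ => kolmogorovWeight_nonneg hs.le (hre j)) hk

lemma continuous_kolmogorovSum_circle (hf : IntegrableOn f (Ico 0 (2 * π)) ν) (hs : 0 < s)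
    (hr0 : 0 ≤ r) (hr1 : r < 1) :
    Continuous fun θ : ℝ => kolmogorovSum ν f s (r * cexp (θ * I)) :=
  continuous_finsetSum _ fun k _ => continuous_kolmogorovWeight_herglotzIntegral_circle
    (Integrable.jordanPart hf k) (jordanPart_nonneg f k) hs hr0 hr1

theorem integral_kolmogorovSum_circle_le (hf : IntegrableOn f (Ico 0 (2 * π)) ν) (hs : 0 < s)
    (hr0 : 0 ≤ r) (hr1 : r < 1) :
    ∫ θ in Ico 0 (2 * π), kolmogorovSum ν f s (r * cexp (θ * I))
      ≤ 2 * π * (4 * totalVariation ν f / s) := by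
  simp only [kolmogorovSum]
  rw [integral_finsetSum _ fun k _ => ((continuous_kolmogorovWeight_herglotzIntegral_circle
    (Integrable.jordanPart hf k) (jordanPart_nonneg f k) hs hr0 hr1).integrableOn_Icc).mono_set
    Ico_subset_Icc_self]
  calc _ ≤ ∑ k ∈ Finset.range 4, 2 * π * ((∫ t in Ico 0 (2 * π), jordanPart f k t ∂ν) / s) :=
        Finset.sum_le_sum fun k _ => integral_kolmogorovWeight_herglotzIntegral_circle_le
          (Integrable.jordanPart hf k) (jordanPart_nonneg f k) hs hr0 hr1
    _ ≤ ∑ k ∈ Finset.range 4, 2 * π * (totalVariation ν f / s) := by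
        gcongr with k
        exact setIntegral_mono (Integrable.jordanPart hf k) hf.norm (jordanPart_le_norm f k)
    _ = 2 * π * (4 * totalVariation ν f / s) := by
        simp only [Finset.sum_const, Finset.card_range, nsmul_eq_mul]
        ring

theorem lintegral_kolmogorovSum_circle_le (hf : IntegrableOn f (Ico 0 (2 * π)) ν) (hs : 0 < s)
    (hr0 : 0 ≤ r) (hr1 : r < 1) :
    ∫⁻ θ in Ico 0 (2 * π), ENNReal.ofReal (kolmogorovSum ν f s (r * cexp (θ * I)))
      ≤ ENNReal.ofReal (2 * π * (4 * totalVariation ν f / s)) := by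
  rw [← ofReal_integral_eq_lintegral_ofReal
    ((continuous_kolmogorovSum_circle hf hs hr0 hr1).integrableOn_Icc.mono_set Ico_subset_Icc_self)
    (ae_of_all _ fun θ => kolmogorovSum_nonneg hf hs.le
      (mem_ball_zero_iff.mp (ofReal_mul_exp_mul_I_mem_ball hr0 hr1 θ)))]
  exact ENNReal.ofReal_le_ofReal (integral_kolmogorovSum_circle_le hf hs hr0 hr1)

end KolmogorovSum

lemma tendsto_ofReal_mul_exp_mul_I (θ : ℝ) :
    Tendsto (fun r : ℝ => (r : ℂ) * cexp (θ * I)) (𝓝 1) (𝓝 (cexp (θ * I))) :=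
  (Complex.continuous_ofReal.mul continuous_const).tendsto' 1 _ (by simp)

lemma ofReal_mul_exp_mul_I_mem_OmegaRegionAt {α θ r : ℝ} (hα : 0 < α) (hr0 : 0 < r)
    (hr1 : r < 1) : (r : ℂ) * cexp (θ * I) ∈ OmegaRegionAt α θ := by
  refine ⟨r, Or.inr (mem_biUnion (mem_ball_self hα) ⟨r, 1 - r, hr0, by linarith, by ring, ?_⟩),
    mul_comm _ _⟩
  simp [real_smul]

theorem HasNTLimit.tendsto_radial {Φ : ℂ → ℂ} {θ : ℝ} {L : ℂ} (h : HasNTLimit Φ θ L) :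
    Tendsto (fun r : ℝ => Φ (r * cexp (θ * I))) (𝓝[<] 1) (𝓝 L) := by
  refine (h (1 / 2) ⟨by norm_num, by norm_num⟩).comp (tendsto_nhdsWithin_iff.2 ⟨?_, ?_⟩)
  · exact (tendsto_ofReal_mul_exp_mul_I θ).mono_left nhdsWithin_le_nhds
  · filter_upwards [Ioo_mem_nhdsLT zero_lt_one] with r hr
    exact ofReal_mul_exp_mul_I_mem_OmegaRegionAt (by norm_num) hr.1 hr.2

theorem MeasureTheory.mul_measure_le_of_le_liminf {α : Type*} [MeasurableSpace α] {μ : Measure α}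
    {F : ℕ → α → ℝ≥0∞} (hF : ∀ n, Measurable (F n)) {B c : ℝ≥0∞}
    (hB : ∀ n, ∫⁻ x, F n x ∂μ ≤ B) {E : Set α} (hE : ∀ x ∈ E, c ≤ liminf (fun n => F n x) atTop) :
    c * μ E ≤ B :=
  calc c * μ E ≤ c * μ {x | c ≤ liminf (fun n => F n x) atTop} := by gcongr; exact hE
    _ ≤ ∫⁻ x, liminf (fun n => F n x) atTop ∂μ :=
        mul_meas_ge_le_lintegral₀ (Measurable.liminf hF).aemeasurable c
    _ ≤ liminf (fun n => ∫⁻ x, F n x ∂μ) atTop := lintegral_liminf_le hF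
    _ ≤ B := liminf_le_of_frequently_le' (Frequently.of_forall hB)

section WeakType

variable {ν : Measure ℝ} {f : ℝ → ℂ} {t : ℝ}

theorem half_le_liminf_kolmogorovSum (hf : IntegrableOn f (Ico 0 (2 * π)) ν) (ht : 0 < t)
    (hTV : totalVariation ν f ≤ t) {u : ℕ → ℝ} (hu : ∀ n, u n ∈ Ioo 0 1)
    (hlim : Tendsto u atTop (𝓝 1)) {θ : ℝ} {L : ℂ} (hL : HasNTLimit (cauchyIntegral ν f) θ L)
    (htL : t < ‖L‖) :
    ENNReal.ofReal (1 / 2) ≤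
      liminf (fun n => ENNReal.ofReal (kolmogorovSum ν f (t / 4) (u n * cexp (θ * I)))) atTop := by
  set M := ∫ x in Ico 0 (2 * π), f x ∂ν
  have hz : ∀ n, ‖(u n : ℂ) * cexp (θ * I)‖ < 1 := fun n =>
    mem_ball_zero_iff.mp (ofReal_mul_exp_mul_I_mem_ball (hu n).1.le (hu n).2 θ)
  have hH : Tendsto (fun n => herglotzIntegral ν f (u n * cexp (θ * I))) atTop
      (𝓝 (M - 2 * cexp (θ * I) * L)) := by
    have hu' : Tendsto u atTop (𝓝[<] 1) :=
      tendsto_nhdsWithin_iff.2 ⟨hlim, Eventually.of_forall fun n => (hu n).2⟩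
    simp_rw [herglotzIntegral_eq_sub_cauchyIntegral hf (hz _)]
    exact tendsto_const_nhds.sub
      ((((tendsto_ofReal_mul_exp_mul_I θ).comp hlim).const_mul 2).mul (hL.tendsto_radial.comp hu'))
  have hlarge : t < ‖M - 2 * cexp (θ * I) * L‖ := by
    have hM : ‖M‖ ≤ totalVariation ν f := norm_integral_le_integral_norm _
    have h2L : ‖2 * cexp (θ * I) * L‖ = 2 * ‖L‖ := by simp [norm_exp_ofReal_mul_I]
    have := norm_sub_norm_le (2 * cexp (θ * I) * L) M
    rw [norm_sub_rev] at this
    linarith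
  refine le_liminf_of_le (by isBoundedDefault) ?_
  filter_upwards [hH.norm.eventually (eventually_gt_nhds hlarge)] with n hn
  exact ENNReal.ofReal_le_ofReal
    (half_le_kolmogorovSum hf (by positivity) (hz n) (by linarith))

theorem volume_setOf_ntLimit_gt_le (hf : IntegrableOn f (Ico 0 (2 * π)) ν) (ht : 0 < t)
    (hTV : totalVariation ν f ≤ t) :
    volume {θ ∈ Ico (0 : ℝ) (2 * π) | ∃ L : ℂ, HasNTLimit (cauchyIntegral ν f) θ L ∧ t < ‖L‖}
      ≤ ENNReal.ofReal (32 * totalVariation ν f / t * (2 * π)) := by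
  set E := {θ ∈ Ico (0 : ℝ) (2 * π) | ∃ L : ℂ, HasNTLimit (cauchyIntegral ν f) θ L ∧ t < ‖L‖}
  obtain ⟨u, -, hu, hlim⟩ := exists_seq_strictMono_tendsto' (zero_lt_one' ℝ)
  have hs : 0 < t / 4 := by positivity
  have key := mul_measure_le_of_le_liminf (μ := volume.restrict (Ico 0 (2 * π))) (E := E)
    (fun n => ENNReal.measurable_ofReal.comp
      (continuous_kolmogorovSum_circle hf hs (hu n).1.le (hu n).2).measurable)
    (fun n => lintegral_kolmogorovSum_circle_le hf hs (hu n).1.le (hu n).2)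
    (fun θ ⟨_, L, hL, htL⟩ => half_le_liminf_kolmogorovSum hf ht hTV hu hlim hL htL)
  rw [show volume.restrict (Ico 0 (2 * π)) E = volume E from
    Measure.restrict_eq_self _ (sep_subset _ _)] at key
  calc volume E = ENNReal.ofReal 2 * (ENNReal.ofReal (1 / 2) * volume E) := by
        rw [← mul_assoc, ← ENNReal.ofReal_mul (by norm_num)]
        norm_num
    _ ≤ ENNReal.ofReal 2 * ENNReal.ofReal (2 * π * (4 * totalVariation ν f / (t / 4))) := by
        gcongr
    _ = ENNReal.ofReal (32 * totalVariation ν f / t * (2 * π)) := by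
        rw [← ENNReal.ofReal_mul (by norm_num)]
        congr 1
        field_simp
        ring

end WeakType

/-- there is an absolute constant `C > 0` such that for every complex Borel
measure `μ = f dν` of finite total variation on the circle and every `t > 0`, the normalized
Lebesgue measure of the set of `θ ∈ [0, 2π)` at which the non-tangential limit of `I_μ` exists
and has modulus `> t` is at most `C ‖μ‖ / t`. -/
theorem cauchyIntegral_ntLimit_weak_type :
    ∃ C : ℝ, 0 < C ∧
      ∀ (ν : Measure ℝ), IsFiniteMeasure ν → ∀ f : ℝ → ℂ,
        IntegrableOn f (Set.Ico (0 : ℝ) (2 * Real.pi)) ν →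
        ∀ t : ℝ, 0 < t →
          volume {θ ∈ Set.Ico (0 : ℝ) (2 * Real.pi) |
              ∃ L : ℂ, HasNTLimit (cauchyIntegral ν f) θ L ∧ t < ‖L‖}
              / ENNReal.ofReal (2 * Real.pi)
            ≤ ENNReal.ofReal (C * totalVariation ν f / t) := by
  refine ⟨32, by norm_num, fun ν _ f hf t ht => ENNReal.div_le_of_le_mul ?_⟩
  have hTV0 : 0 ≤ totalVariation ν f :=
    setIntegral_nonneg measurableSet_Ico fun _ _ => norm_nonneg _
  rw [← ENNReal.ofReal_mul (by positivity)]
  rcases le_or_gt (totalVariation ν f) t with hTV | hTV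
  · exact volume_setOf_ntLimit_gt_le hf ht hTV
  · calc _ ≤ volume (Ico (0 : ℝ) (2 * π)) := measure_mono (sep_subset _ _)
      _ = ENNReal.ofReal (1 * (2 * π)) := by rw [Real.volume_Ico, one_mul, sub_zero]
      _ ≤ _ := by
        gcongr
        rw [le_div_iff₀ ht]
        linarith

end
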